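/- Let 𝒯 be a T-mesh (so the interior Ω° of the domain is connected), let m, m' ∈ ℕ, and let (p_σ)_{σ ∈ 𝒯₂} be a family of polynomials p_σ ∈ R_{m,m'} such that p_σ = p_{σ'} whenever two distinct cells σ and σ' contain a common interior edge. Then all the p_σ are equal; consequently, the space of such families is isomorphic to R_{m,m'} and has dimension (m+1)(m'+1). -/
import Mathlib


open MvPolynomial

noncomputable section

/-- The closed axis-aligned box (rectangle, segment or point) with corners `e.1 ≤ e.2`. -/
abbrev seg (e : (ℝ × ℝ) × (ℝ × ℝ)) : Set (ℝ × ℝ) := Set.Icc e.1 e.2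

/-- An axis-aligned segment is horizontal when both endpoints have the same second coordinate. -/
def IsHoriz (e : (ℝ × ℝ) × (ℝ × ℝ)) : Prop := e.1.2 = e.2.2

/-- An axis-aligned segment is vertical when both endpoints have the same first coordinate. -/
def IsVert (e : (ℝ × ℝ) × (ℝ × ℝ)) : Prop := e.1.1 = e.2.1

/-- A planar T-mesh: a finite set of closed axis-aligned rectangular cells (given by their
lower-left and upper-right corners), together with a finite set of closed axis-aligned edges
(given by their endpoints), satisfying the T-mesh axioms.  The vertices are the endpoints of
the edges.  The domain `Ω` (union of the cells) is assumed simply connected with connected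
interior. -/
structure TMesh where
  /-- the cells, encoded by the pair (lower-left corner, upper-right corner) -/
  cells : Finset ((ℝ × ℝ) × (ℝ × ℝ))
  /-- the edges, encoded by their pair of endpoints -/
  edges : Finset ((ℝ × ℝ) × (ℝ × ℝ))
  cells_nondeg : ∀ c ∈ cells, c.1.1 < c.2.1 ∧ c.1.2 < c.2.2
  edges_nondeg : ∀ e ∈ edges,
    (e.1.1 = e.2.1 ∧ e.1.2 < e.2.2) ∨ (e.1.2 = e.2.2 ∧ e.1.1 < e.2.1)
  edges_sub : ∀ e ∈ edges, seg e ⊆ ⋃ c ∈ cells, frontier (seg c)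
  cell_boundary : ∀ c ∈ cells, ∃ E ⊆ edges, frontier (seg c) = ⋃ e ∈ E, seg e
  cells_inter_boundary : ∀ c ∈ cells, ∀ c' ∈ cells, c ≠ c' →
    seg c ∩ seg c' = frontier (seg c) ∩ frontier (seg c')
  cells_inter_union : ∀ c ∈ cells, ∀ c' ∈ cells, c ≠ c' →
    ∃ E ⊆ edges, ∃ V : Finset (ℝ × ℝ),
      (∀ v ∈ V, ∃ e ∈ edges, v = e.1 ∨ v = e.2) ∧
      seg c ∩ seg c' = (⋃ e ∈ E, seg e) ∪ ↑V
  edges_inter : ∀ e ∈ edges, ∀ e' ∈ edges, e ≠ e' →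
    seg e ∩ seg e' = ({e.1, e.2} ∩ {e'.1, e'.2} : Set (ℝ × ℝ))
  verts_hv : ∀ e ∈ edges, ∀ v ∈ ({e.1, e.2} : Set (ℝ × ℝ)),
    (∃ h ∈ edges, IsHoriz h ∧ v ∈ seg h) ∧ (∃ h ∈ edges, IsVert h ∧ v ∈ seg h)
  omega_simply_connected : SimplyConnectedSpace ↥(⋃ c ∈ cells, seg c)
  omega_interior_connected : IsConnected (interior (⋃ c ∈ cells, seg c))

namespace TMesh

variable (T : TMesh)

/-- The domain of the T-mesh: the union of its cells. -/
def Omega : Set (ℝ × ℝ) := ⋃ c ∈ T.cells, seg c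

/-- The vertices of the T-mesh: the endpoints of its edges. -/
def verts : Finset (ℝ × ℝ) := T.edges.image Prod.fst ∪ T.edges.image Prod.snd

/-- An edge is interior when it meets the interior of the domain. -/
def InteriorEdge (e : (ℝ × ℝ) × (ℝ × ℝ)) : Prop := (seg e ∩ interior T.Omega).Nonempty

/-- `f₂`: the number of cells. -/
def f2 : ℕ := T.cells.card

/-- `f₁ʰ`: the number of horizontal interior edges. -/
def f1h : ℕ := {e | e ∈ T.edges ∧ T.InteriorEdge e ∧ IsHoriz e}.ncard

/-- `f₁ᵛ`: the number of vertical interior edges. -/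
def f1v : ℕ := {e | e ∈ T.edges ∧ T.InteriorEdge e ∧ IsVert e}.ncard

/-- `f₁ᵒ`: the number of interior edges. -/
def f1o : ℕ := {e | e ∈ T.edges ∧ T.InteriorEdge e}.ncard

/-- `f₀ᵒ`: the number of interior vertices. -/
def f0o : ℕ := {v | v ∈ T.verts ∧ v ∈ interior T.Omega}.ncard

/-- The edges passing through a given point. -/
def edgesThrough (v : ℝ × ℝ) : Set ((ℝ × ℝ) × (ℝ × ℝ)) := {e | e ∈ T.edges ∧ v ∈ seg e}

/-- A crossing vertex: an interior vertex belonging to `4` distinct edges. -/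
def IsCrossing (v : ℝ × ℝ) : Prop := v ∈ interior T.Omega ∧ (T.edgesThrough v).ncard = 4

/-- A T-vertex: an interior vertex belonging to exactly `3` distinct edges. -/
def IsTVert (v : ℝ × ℝ) : Prop := v ∈ interior T.Omega ∧ (T.edgesThrough v).ncard = 3

/-- `f₀⁺`: the number of crossing vertices. -/
def f0p : ℕ := {v | v ∈ T.verts ∧ T.IsCrossing v}.ncard

/-- `f₀ᵀ`: the number of T-vertices. -/
def f0T : ℕ := {v | v ∈ T.verts ∧ T.IsTVert v}.ncard

/-- `f₀ᵇ`: the number of boundary vertices. -/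
def f0b : ℕ := {v | v ∈ T.verts ∧ v ∉ interior T.Omega}.ncard

end TMesh

/-- `Rmm m m'` is the space of real polynomials in `s = X 0`, `t = X 1` of degree at most `m`
in `s` and at most `m'` in `t` (bidegree ≤ (m, m')). -/
def Rmm (m m' : ℕ) : Submodule ℝ (MvPolynomial (Fin 2) ℝ) where
  carrier := {p | ∀ d ∈ p.support, d 0 ≤ m ∧ d 1 ≤ m'}
  add_mem' := by
    intro p q hp hq d hd
    rcases Finset.mem_union.mp (MvPolynomial.support_add hd) with h | h
    · exact hp d h
    · exact hq d h
  zero_mem' := by intro d hd; simp at hd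
  smul_mem' := by
    intro c p hp d hd
    exact hp d (MvPolynomial.support_smul hd)

/-- The spline space `S^{r,r'}_{m,m'}(𝒯)`: families `(p_σ)_{σ ∈ 𝒯₂}` of polynomials of
bidegree at most `(m,m')` such that across every interior edge contained in two distinct
cells `σ, σ'`, the difference `p_σ - p_σ'` is divisible by `(s-a)^{r+1}` (vertical edge on
the line `s = a`) resp. `(t-b)^{r'+1}` (horizontal edge on the line `t = b`). -/
def Spline (T : TMesh) (m m' r r' : ℕ) :
    Submodule ℝ ({c // c ∈ T.cells} → MvPolynomial (Fin 2) ℝ) where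
  carrier := {p | (∀ σ, p σ ∈ Rmm m m') ∧
    ∀ σ σ' : {c // c ∈ T.cells}, σ ≠ σ' → ∀ e ∈ T.edges, T.InteriorEdge e →
      seg e ⊆ seg σ.1 → seg e ⊆ seg σ'.1 →
      (IsVert e → (X 0 - C e.1.1) ^ (r + 1) ∣ p σ - p σ') ∧
      (IsHoriz e → (X 1 - C e.1.2) ^ (r' + 1) ∣ p σ - p σ')}
  add_mem' := by
    rintro p q ⟨hp1, hp2⟩ ⟨hq1, hq2⟩
    refine ⟨fun σ => (Rmm m m').add_mem (hp1 σ) (hq1 σ), ?_⟩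
    intro σ σ' hne e he hie h1 h2
    have Hp := hp2 σ σ' hne e he hie h1 h2
    have Hq := hq2 σ σ' hne e he hie h1 h2
    have heq : (p + q) σ - (p + q) σ' = (p σ - p σ') + (q σ - q σ') := by
      simp only [Pi.add_apply]; ring
    exact ⟨fun hv => heq ▸ dvd_add (Hp.1 hv) (Hq.1 hv),
           fun hh => heq ▸ dvd_add (Hp.2 hh) (Hq.2 hh)⟩
  zero_mem' := by
    refine ⟨fun σ => (Rmm m m').zero_mem, ?_⟩
    intro σ σ' hne e he hie h1 h2
    constructor <;> intro _ <;> simp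
  smul_mem' := by
    rintro c p ⟨hp1, hp2⟩
    refine ⟨fun σ => (Rmm m m').smul_mem c (hp1 σ), ?_⟩
    intro σ σ' hne e he hie h1 h2
    have Hp := hp2 σ σ' hne e he hie h1 h2
    have heq : (c • p) σ - (c • p) σ' = C c * (p σ - p σ') := by
      simp only [Pi.smul_apply, MvPolynomial.smul_eq_C_mul]; ring
    exact ⟨fun hv => heq ▸ (Hp.1 hv).mul_left _,
           fun hh => heq ▸ (Hp.2 hh).mul_left _⟩


/-- The space of families `(p_σ)_{σ ∈ 𝒯₂}` of polynomials of bidegree `≤ (m,m')` such that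
`p_σ = p_σ'` whenever two distinct cells `σ, σ'` contain a common interior edge. -/
def ConstSpline (T : TMesh) (m m' : ℕ) :
    Submodule ℝ ({c // c ∈ T.cells} → MvPolynomial (Fin 2) ℝ) where
  carrier := {p | (∀ σ, p σ ∈ Rmm m m') ∧
    ∀ σ σ' : {c // c ∈ T.cells}, σ ≠ σ' →
      (∃ e ∈ T.edges, T.InteriorEdge e ∧ seg e ⊆ seg σ.1 ∧ seg e ⊆ seg σ'.1) →
      p σ = p σ'}
  add_mem' := by
    rintro p q ⟨hp1, hp2⟩ ⟨hq1, hq2⟩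
    refine ⟨fun σ => (Rmm m m').add_mem (hp1 σ) (hq1 σ), ?_⟩
    intro σ σ' hne he
    simp only [Pi.add_apply, hp2 σ σ' hne he, hq2 σ σ' hne he]
  zero_mem' := ⟨fun σ => (Rmm m m').zero_mem, fun σ σ' _ _ => rfl⟩
  smul_mem' := by
    rintro c p ⟨hp1, hp2⟩
    refine ⟨fun σ => (Rmm m m').smul_mem c (hp1 σ), ?_⟩
    intro σ σ' hne he
    simp only [Pi.smul_apply, hp2 σ σ' hne he]

section TopoAux
open Set Metric

open Set Metric

-- rank fact
lemma rank_R2 : (1:Cardinal) < Module.rank ℝ (ℝ × ℝ) := by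
  rw [rank_prod, Module.rank_self]
  simp only [Cardinal.lift_one]
  exact_mod_cast one_lt_two

/-- The punctured ball in `ℝ × ℝ` is connected. -/
lemma isConnected_punctured_ball (x : ℝ × ℝ) {r : ℝ} (hr : 0 < r) :
    IsConnected (Metric.ball x r \ {x}) := by
  have hsph : IsConnected (Metric.sphere x (1:ℝ)) := isConnected_sphere rank_R2 x zero_le_one
  have hIoo : IsConnected (Set.Ioo (0:ℝ) r) := isConnected_Ioo hr
  have hS : IsConnected ((Metric.sphere x (1:ℝ)) ×ˢ (Set.Ioo (0:ℝ) r)) := hsph.prod hIoo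
  have hf : Continuous (fun p : (ℝ × ℝ) × ℝ => x + p.2 • (p.1 - x)) :=
    continuous_const.add (continuous_snd.smul (continuous_fst.sub continuous_const))
  have himg := hS.image _ hf.continuousOn
  convert himg using 1
  ext y
  constructor
  · rintro ⟨hy, hyx⟩
    have hne : y - x ≠ 0 := sub_ne_zero.2 hyx
    have hd : 0 < ‖y - x‖ := norm_pos_iff.2 hne
    refine ⟨(x + ‖y - x‖⁻¹ • (y - x), ‖y - x‖), ⟨?_, ?_, ?_⟩, ?_⟩
    · simp only [mem_sphere_iff_norm, add_sub_cancel_left, norm_smul, norm_inv, norm_norm]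
      field_simp
    · exact hd
    · simpa [dist_eq_norm] using hy
    · simp only [add_sub_cancel_left, smul_smul]
      rw [mul_inv_cancel₀ (ne_of_gt hd), one_smul]
      abel
  · rintro ⟨⟨s, t⟩, ⟨hs, ht0, htr⟩, rfl⟩
    have hs1 : ‖s - x‖ = 1 := by simpa [dist_eq_norm] using hs
    constructor
    · simp only [mem_ball, dist_eq_norm, add_sub_cancel_left, norm_smul, hs1, mul_one]
      simp only at ht0 htr
      rw [Real.norm_eq_abs, abs_of_pos ht0]
      exact htr
    · simp only [mem_singleton_iff, add_eq_left]
      intro h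
      rw [smul_eq_zero] at h
      rcases h with h | h
      · exact absurd h (ne_of_gt ht0)
      · rw [sub_eq_zero] at h
        rw [h] at hs1
        simp at hs1

/-- Helper: derive a contradiction in the punctured-connectivity argument. -/
lemma punct_aux {U : Set (ℝ × ℝ)} (hc : IsPreconnected U) {a : ℝ × ℝ}
    {r : ℝ} (hr : 0 < r) (hball : Metric.ball a r ⊆ U)
    {u v : Set (ℝ × ℝ)} (hu : IsOpen u) (hv : IsOpen v)
    (hsub : U \ {a} ⊆ u ∪ v)
    (hemp : ¬((U \ {a}) ∩ (u ∩ v)).Nonempty)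
    (hp : ((U \ {a}) ∩ u).Nonempty) (hq : ((U \ {a}) ∩ v).Nonempty)
    (hPu : Metric.ball a r \ {a} ⊆ u) : False := by
  have haU : a ∈ U := hball (Metric.mem_ball_self hr)
  -- apply preconnectedness of U with opens u ∪ ball a r and v
  have hU2 : U ⊆ (u ∪ Metric.ball a r) ∪ v := by
    intro z hz
    by_cases hza : z = a
    · exact Or.inl (Or.inr (hza ▸ Metric.mem_ball_self hr))
    · rcases hsub ⟨hz, hza⟩ with h | h
      · exact Or.inl (Or.inl h)
      · exact Or.inr h
  obtain ⟨p, ⟨hpU, -⟩, hpu⟩ := hp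
  obtain ⟨q, ⟨hqU, -⟩, hqv⟩ := hq
  obtain ⟨z, hzU, hz1, hzv⟩ :=
    hc (u ∪ Metric.ball a r) v (hu.union Metric.isOpen_ball) hv hU2
      ⟨p, hpU, Or.inl hpu⟩ ⟨q, hqU, hqv⟩
  by_cases hza : z = a
  · -- then a ∈ v; find a nearby point in u ∩ v distinct from a
    subst hza
    obtain ⟨ε, hε, hεv⟩ := Metric.isOpen_iff.1 hv z hzv
    set δ := min r ε with hδ
    have hδ0 : 0 < δ := lt_min hr hε
    set w : ℝ × ℝ := (z.1 + δ / 2, z.2) with hw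
    have hwz : w ≠ z := by
      intro h
      have := congrArg Prod.fst h
      simp only [hw] at this
      linarith
    have hdist : dist w z = δ / 2 := by
      simp only [hw, Prod.dist_eq, Real.dist_eq]
      rw [add_sub_cancel_left, sub_self, abs_zero, abs_of_pos (by linarith : (0:ℝ) < δ/2)]
      exact max_eq_left (by linarith)
    have hwr : w ∈ Metric.ball z r := by
      rw [Metric.mem_ball, hdist]
      calc δ / 2 < δ := by linarith
        _ ≤ r := min_le_left _ _
    have hwε : w ∈ Metric.ball z ε := by
      rw [Metric.mem_ball, hdist]
      calc δ / 2 < δ := by linarith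
        _ ≤ ε := min_le_right _ _
    exact hemp ⟨w, ⟨⟨hball hwr, hwz⟩, hPu ⟨hwr, hwz⟩, hεv hwε⟩⟩
  · -- z ≠ a : z ∈ (U \ {a}) ∩ u ∩ v
    have hzu : z ∈ u := by
      rcases hz1 with h | h
      · exact h
      · exact hPu ⟨h, hza⟩
    exact hemp ⟨z, ⟨hzU, hza⟩, hzu, hzv⟩

/-- An open preconnected subset of `ℝ²` minus a point is preconnected. -/
lemma isPreconnected_diff_singleton {U : Set (ℝ × ℝ)} (hU : IsOpen U)
    (hc : IsPreconnected U) (a : ℝ × ℝ) : IsPreconnected (U \ {a}) := by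
  by_cases haU : a ∈ U
  · obtain ⟨r, hr, hball⟩ := Metric.isOpen_iff.1 hU a haU
    intro u v hu hv hsub hp hq
    by_contra hemp
    have hP : IsConnected (Metric.ball a r \ {a}) := isConnected_punctured_ball a hr
    have hPV : Metric.ball a r \ {a} ⊆ U \ {a} := fun y hy => ⟨hball hy.1, hy.2⟩
    have hPuv : Metric.ball a r \ {a} ⊆ u ∪ v := fun y hy => hsub (hPV hy)
    have : (Metric.ball a r \ {a}) ∩ u = ∅ ∨ (Metric.ball a r \ {a}) ∩ v = ∅ := by
      by_contra h
      push_neg at h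
      obtain ⟨h1, h2⟩ := h
      obtain ⟨y, hy⟩ := hP.isPreconnected u v hu hv hPuv
        h1 h2
      exact hemp ⟨y, hPV hy.1, hy.2⟩
    rcases this with h | h
    · -- P ⊆ v
      have hPv : Metric.ball a r \ {a} ⊆ v := by
        intro y hy
        rcases hPuv hy with h' | h'
        · exact absurd (Set.mem_inter hy h') (by rw [h]; exact Set.notMem_empty y)
        · exact h'
      exact punct_aux hc hr hball hv hu
        (fun y hy => (hsub hy).symm) (fun ⟨y, hy1, hy2⟩ => hemp ⟨y, hy1, hy2.2, hy2.1⟩)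
        hq hp hPv
    · have hPu : Metric.ball a r \ {a} ⊆ u := by
        intro y hy
        rcases hPuv hy with h' | h'
        · exact h'
        · exact absurd (Set.mem_inter hy h') (by rw [h]; exact Set.notMem_empty y)
      exact punct_aux hc hr hball hu hv hsub hemp hp hq hPu
  · rwa [Set.diff_singleton_eq_self (by simpa using haU)]

/-- An open preconnected subset of `ℝ²` minus a finite set is preconnected. -/
lemma isPreconnected_diff_finset (s : Finset (ℝ × ℝ)) :
    ∀ (U : Set (ℝ × ℝ)), IsOpen U → IsPreconnected U → IsPreconnected (U \ ↑s) := by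
  induction s using Finset.induction_on with
  | empty => intro U _ hc; simpa using hc
  | @insert a s ha ih =>
      intro U hU hc
      have h1 : IsOpen (U \ {a}) := hU.sdiff isClosed_singleton
      have h2 : IsPreconnected (U \ {a}) := isPreconnected_diff_singleton hU hc a
      have : U \ ↑(insert a s) = (U \ {a}) \ ↑s := by
        rw [Finset.coe_insert, Set.insert_eq, ← Set.diff_diff]
      rw [this]
      exact ih _ h1 h2

end TopoAux

section RmmSec
namespace RmmAux

/-- The exponent finsupp with value `i` at `0` and `j` at `1`. -/
def fd (i j : ℕ) : Fin 2 →₀ ℕ := Finsupp.single 0 i + Finsupp.single 1 j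

lemma fd_apply0 (i j : ℕ) : fd i j 0 = i := by
  simp [fd, Finsupp.single_apply]

lemma fd_apply1 (i j : ℕ) : fd i j 1 = j := by
  simp [fd, Finsupp.single_apply]

lemma fd_eq (d : Fin 2 →₀ ℕ) : fd (d 0) (d 1) = d := by
  ext a
  fin_cases a
  · exact fd_apply0 _ _
  · exact fd_apply1 _ _

lemma fd_inj {i j i' j' : ℕ} (h : fd i j = fd i' j') : i = i' ∧ j = j' := by
  constructor
  · rw [← fd_apply0 i j, h, fd_apply0]
  · rw [← fd_apply1 i j, h, fd_apply1]

variable (m m' : ℕ)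

/-- The index function. -/
def idx (ij : Fin (m + 1) × Fin (m' + 1)) : Fin 2 →₀ ℕ := fd ij.1 ij.2

noncomputable def toFun (p : MvPolynomial (Fin 2) ℝ) : Fin (m + 1) × Fin (m' + 1) → ℝ :=
  fun ij => coeff (idx m m' ij) p

noncomputable def invFun (f : Fin (m + 1) × Fin (m' + 1) → ℝ) : MvPolynomial (Fin 2) ℝ :=
  ∑ ij : Fin (m + 1) × Fin (m' + 1), monomial (idx m m' ij) (f ij)

lemma coeff_invFun (f : Fin (m + 1) × Fin (m' + 1) → ℝ) (d : Fin 2 →₀ ℕ) :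
    coeff d (invFun m m' f) = ∑ ij : Fin (m + 1) × Fin (m' + 1),
      (if idx m m' ij = d then f ij else 0) := by
  rw [invFun, MvPolynomial.coeff_sum]
  exact Finset.sum_congr rfl fun ij _ => coeff_monomial d (idx m m' ij) (f ij)

lemma invFun_mem (f : Fin (m + 1) × Fin (m' + 1) → ℝ) : invFun m m' f ∈ Rmm m m' := by
  intro d hd
  have hne : coeff d (invFun m m' f) ≠ 0 := MvPolynomial.mem_support_iff.1 hd
  rw [coeff_invFun] at hne
  obtain ⟨ij, -, hij⟩ := Finset.exists_ne_zero_of_sum_ne_zero hne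
  have h : idx m m' ij = d := by
    by_contra h; simp [h] at hij
  constructor
  · rw [← h, idx, fd_apply0]; exact Nat.lt_succ_iff.1 ij.1.isLt
  · rw [← h, idx, fd_apply1]; exact Nat.lt_succ_iff.1 ij.2.isLt

lemma left_inv (p : MvPolynomial (Fin 2) ℝ) (hp : p ∈ Rmm m m') :
    invFun m m' (toFun m m' p) = p := by
  apply MvPolynomial.ext
  intro d
  rw [coeff_invFun]
  by_cases hd : d 0 ≤ m ∧ d 1 ≤ m'
  · set ij₀ : Fin (m + 1) × Fin (m' + 1) :=
      (⟨d 0, Nat.lt_succ_iff.2 hd.1⟩, ⟨d 1, Nat.lt_succ_iff.2 hd.2⟩) with hij₀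
    have hidx : idx m m' ij₀ = d := fd_eq d
    rw [Finset.sum_eq_single ij₀]
    · simp [hidx, toFun]
    · intro b _ hb
      have : idx m m' b ≠ d := by
        intro h
        apply hb
        obtain ⟨h1, h2⟩ := fd_inj (h.trans hidx.symm)
        ext
        · exact h1
        · exact h2
      simp [this]
    · intro h; exact absurd (Finset.mem_univ _) h
  · have h0 : coeff d p = 0 := by
      by_contra h
      exact hd (hp d (MvPolynomial.mem_support_iff.2 h))
    rw [h0]
    apply Finset.sum_eq_zero
    intro ij _
    have : idx m m' ij ≠ d := by
      intro h
      apply hd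
      constructor
      · rw [← h, idx, fd_apply0]; exact Nat.lt_succ_iff.1 ij.1.isLt
      · rw [← h, idx, fd_apply1]; exact Nat.lt_succ_iff.1 ij.2.isLt
    simp [this]

lemma right_inv (f : Fin (m + 1) × Fin (m' + 1) → ℝ) :
    toFun m m' (invFun m m' f) = f := by
  funext ij
  rw [toFun, coeff_invFun, Finset.sum_eq_single ij]
  · simp
  · intro b _ hb
    have : idx m m' b ≠ idx m m' ij := by
      intro h
      apply hb
      obtain ⟨h1, h2⟩ := fd_inj h
      ext
      · exact h1
      · exact h2
    simp [this]
  · intro h; exact absurd (Finset.mem_univ _) h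

end RmmAux

/-- `Rmm m m'` is linearly equivalent to functions on `Fin (m+1) × Fin (m'+1)`. -/
noncomputable def rmmEquiv (m m' : ℕ) :
    ↥(Rmm m m') ≃ₗ[ℝ] (Fin (m + 1) × Fin (m' + 1) → ℝ) where
  toFun p := RmmAux.toFun m m' p.1
  invFun f := ⟨RmmAux.invFun m m' f, RmmAux.invFun_mem m m' f⟩
  left_inv p := Subtype.ext (RmmAux.left_inv m m' p.1 p.2)
  right_inv f := RmmAux.right_inv m m' f
  map_add' p q := by
    funext ij
    simp [RmmAux.toFun, MvPolynomial.coeff_add]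
  map_smul' c p := by
    funext ij
    simp [RmmAux.toFun]


end RmmSec

section MainAux

open Set Metric

lemma TMesh.seg_subset_Omega (T : TMesh) {c : (ℝ × ℝ) × (ℝ × ℝ)} (hc : c ∈ T.cells) :
    seg c ⊆ T.Omega :=
  Set.subset_biUnion_of_mem hc

lemma TMesh.interior_seg_infinite (T : TMesh) {c : (ℝ × ℝ) × (ℝ × ℝ)} (hc : c ∈ T.cells) :
    (interior (seg c)).Infinite := by
  obtain ⟨h1, h2⟩ := T.cells_nondeg c hc
  have hseg : seg c = Set.Icc c.1.1 c.2.1 ×ˢ Set.Icc c.1.2 c.2.2 := Set.Icc_prod_eq c.1 c.2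
  rw [hseg, interior_prod_eq, interior_Icc, interior_Icc]
  exact (Set.Ioo_infinite h1).prod_left (Set.nonempty_Ioo.2 h2)

lemma TMesh.endpoint_mem_verts (T : TMesh) {e : (ℝ × ℝ) × (ℝ × ℝ)} (he : e ∈ T.edges)
    {v : ℝ × ℝ} (hv : v = e.1 ∨ v = e.2) : v ∈ T.verts := by
  rcases hv with h | h
  · exact Finset.mem_union_left _ (Finset.mem_image.2 ⟨e, he, h.symm⟩)
  · exact Finset.mem_union_right _ (Finset.mem_image.2 ⟨e, he, h.symm⟩)

lemma mem_constSpline_iff {T : TMesh} {m m' : ℕ}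
    {p : {c // c ∈ T.cells} → MvPolynomial (Fin 2) ℝ} :
    p ∈ ConstSpline T m m' ↔ ((∀ σ, p σ ∈ Rmm m m') ∧
    ∀ σ σ' : {c // c ∈ T.cells}, σ ≠ σ' →
      (∃ e ∈ T.edges, T.InteriorEdge e ∧ seg e ⊆ seg σ.1 ∧ seg e ⊆ seg σ'.1) →
      p σ = p σ') := Iff.rfl

/-- Adjacency: two distinct cells sharing a non-vertex interior point carry equal polynomials. -/
lemma constSpline_adjacent {T : TMesh} {m m' : ℕ}
    {p : {c // c ∈ T.cells} → MvPolynomial (Fin 2) ℝ} (hp : p ∈ ConstSpline T m m')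
    (σ σ' : {c // c ∈ T.cells}) (hne : σ ≠ σ') (x : ℝ × ℝ)
    (hxi : x ∈ interior T.Omega) (hxv : x ∉ (T.verts : Set (ℝ × ℝ)))
    (hx1 : x ∈ seg σ.1) (hx2 : x ∈ seg σ'.1) : p σ = p σ' := by
  have hcc : σ.1 ≠ σ'.1 := fun h => hne (Subtype.ext h)
  obtain ⟨E, hE, V, hV, hEq⟩ := T.cells_inter_union σ.1 σ.2 σ'.1 σ'.2 hcc
  have hx : x ∈ (⋃ e ∈ E, seg e) ∪ ↑V := hEq ▸ (Set.mem_inter hx1 hx2)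
  rcases hx with hx | hx
  · obtain ⟨e, heE, hxe⟩ := Set.mem_iUnion₂.1 hx
    have heE' : e ∈ T.edges := hE heE
    have hsegsub : seg e ⊆ seg σ.1 ∩ seg σ'.1 := by
      intro y hy
      rw [hEq]
      exact Or.inl (Set.mem_iUnion₂.2 ⟨e, heE, hy⟩)
    exact (mem_constSpline_iff.1 hp).2 σ σ' hne
      ⟨e, heE', ⟨x, hxe, hxi⟩, fun y hy => (hsegsub hy).1, fun y hy => (hsegsub hy).2⟩
  · exact absurd (T.endpoint_mem_verts (hV x hx).choose_spec.1 (hV x hx).choose_spec.2) hxv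

/-- Any element of `ConstSpline` is constant. -/
lemma constSpline_const (T : TMesh) (m m' : ℕ)
    (p : {c // c ∈ T.cells} → MvPolynomial (Fin 2) ℝ) (hp : p ∈ ConstSpline T m m')
    (σ σ' : {c // c ∈ T.cells}) : p σ = p σ' := by
  classical
  by_contra hps
  set U : Set (ℝ × ℝ) := interior T.Omega \ ↑T.verts with hUdef
  have hUpre : IsPreconnected U :=
    isPreconnected_diff_finset T.verts _ isOpen_interior
      T.omega_interior_connected.isPreconnected
  set A : Set (ℝ × ℝ) := ⋃ τ : {τ : {c // c ∈ T.cells} // p τ = p σ}, seg τ.1.1 with hAdef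
  set B : Set (ℝ × ℝ) := ⋃ τ : {τ : {c // c ∈ T.cells} // p τ ≠ p σ}, seg τ.1.1 with hBdef
  have hA : IsClosed A := isClosed_iUnion_of_finite fun τ => isClosed_Icc
  have hB : IsClosed B := isClosed_iUnion_of_finite fun τ => isClosed_Icc
  have hUAB : U ⊆ A ∪ B := by
    intro x hx
    have hxΩ : x ∈ T.Omega := interior_subset hx.1
    obtain ⟨c, hc, hxc⟩ := Set.mem_iUnion₂.1 hxΩ
    by_cases h : p ⟨c, hc⟩ = p σ
    · exact Or.inl (Set.mem_iUnion.2 ⟨⟨⟨c, hc⟩, h⟩, hxc⟩)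
    · exact Or.inr (Set.mem_iUnion.2 ⟨⟨⟨c, hc⟩, h⟩, hxc⟩)
  have hdisj : ¬(U ∩ (A ∩ B)).Nonempty := by
    rintro ⟨x, hxU, hxA, hxB⟩
    obtain ⟨τ, hxτ⟩ := Set.mem_iUnion.1 hxA
    obtain ⟨τ', hxτ'⟩ := Set.mem_iUnion.1 hxB
    have hττ' : τ.1 ≠ τ'.1 := fun h => τ'.2 (h ▸ τ.2)
    have heq := constSpline_adjacent hp τ.1 τ'.1 hττ' x hxU.1 hxU.2 hxτ hxτ'
    exact τ'.2 (heq.symm.trans τ.2)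
  have wit : ∀ τ : {c // c ∈ T.cells}, ∃ x, x ∈ U ∧ x ∈ seg τ.1 := by
    intro τ
    obtain ⟨x, hx1, hx2⟩ := ((T.interior_seg_infinite τ.2).diff T.verts.finite_toSet).nonempty
    exact ⟨x, ⟨interior_mono (T.seg_subset_Omega τ.2) hx1, hx2⟩, interior_subset hx1⟩
  obtain ⟨xσ, hxσU, hxσ⟩ := wit σ
  obtain ⟨xσ', hxσ'U, hxσ'⟩ := wit σ'
  have hAne : (U ∩ A).Nonempty := ⟨xσ, hxσU, Set.mem_iUnion.2 ⟨⟨σ, rfl⟩, hxσ⟩⟩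
  have hBne : (U ∩ B).Nonempty :=
    ⟨xσ', hxσ'U, Set.mem_iUnion.2 ⟨⟨σ', fun h => hps h.symm⟩, hxσ'⟩⟩
  exact hdisj (isPreconnected_closed_iff.1 hUpre A B hA hB hUAB hAne hBne)

end MainAux

/-- for a T-mesh (whose domain has connected interior), any family of
polynomials of bidegree `≤ (m,m')` which agree across each common interior edge of two
distinct cells is constant; consequently the space of such families is isomorphic to
`R_{m,m'}` and has dimension `(m+1)(m'+1)`. -/
theorem constSpline_eq_and_finrank (T : TMesh) (m m' : ℕ) :
    (∀ p ∈ ConstSpline T m m', ∀ σ σ' : {c // c ∈ T.cells}, p σ = p σ') ∧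
      Nonempty (↥(ConstSpline T m m') ≃ₗ[ℝ] ↥(Rmm m m')) ∧
      Module.finrank ℝ ↥(ConstSpline T m m') = (m + 1) * (m' + 1) := by
  classical
  have hconst := constSpline_const T m m'
  refine ⟨hconst, ?_⟩
  obtain ⟨x, hx⟩ := T.omega_interior_connected.nonempty
  have hxΩ : x ∈ (⋃ c ∈ T.cells, seg c) := interior_subset hx
  obtain ⟨c, hc, -⟩ := Set.mem_iUnion₂.1 hxΩ
  let σ₀ : {c // c ∈ T.cells} := ⟨c, hc⟩
  let E1 : ↥(ConstSpline T m m') ≃ₗ[ℝ] ↥(Rmm m m') :=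
    { toFun := fun p => ⟨p.1 σ₀, (mem_constSpline_iff.1 p.2).1 σ₀⟩
      map_add' := fun p q => rfl
      map_smul' := fun a p => rfl
      invFun := fun q => ⟨fun _ => q.1, mem_constSpline_iff.2 ⟨fun _ => q.2, fun _ _ _ _ => rfl⟩⟩
      left_inv := fun p => Subtype.ext (funext fun σ => hconst p.1 p.2 σ₀ σ)
      right_inv := fun q => rfl }
  refine ⟨⟨E1⟩, ?_⟩
  rw [E1.finrank_eq, (rmmEquiv m m').finrank_eq, Module.finrank_fintype_fun_eq_card]
  simp [mul_comm]

end
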